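/- The induction principle for finite F: let P be the free algebra on x satisfying Σ, assume <_L is an irreflexive linear order extending the relations of Theorem 1, and let F ⊆ P be finite and S ⊆ P nonempty. Then there is w ∈ S such that for all u ∈ P, if p·u ≤_L w for some p ∈ F, then u ∉ S. -/

import Mathlib

/-- Terms in one generator x with binary operations · and ∘. -/
inductive STerm : Type
  | x : STerm
  | mul : STerm → STerm → STerm
  | comp : STerm → STerm → STerm

/-- The congruence generated by the laws Σ. -/
inductive SEq : STerm → STerm → Prop
  | assoc (a b c : STerm) :
      SEq (STerm.comp a (STerm.comp b c)) (STerm.comp (STerm.comp a b) c)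
  | mix (a b c : STerm) :
      SEq (STerm.mul (STerm.comp a b) c) (STerm.mul a (STerm.mul b c))
  | dist (a b c : STerm) :
      SEq (STerm.mul a (STerm.comp b c)) (STerm.comp (STerm.mul a b) (STerm.mul a c))
  | abs (a b : STerm) :
      SEq (STerm.comp a b) (STerm.comp (STerm.mul a b) a)
  | refl (a : STerm) : SEq a a
  | symm {a b : STerm} : SEq a b → SEq b a
  | trans {a b c : STerm} : SEq a b → SEq b c → SEq a c
  | congrMul {a b c d : STerm} : SEq a b → SEq c d → SEq (STerm.mul a c) (STerm.mul b d)
  | congrComp {a b c d : STerm} : SEq a b → SEq c d → SEq (STerm.comp a c) (STerm.comp b d)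

instance STerm.setoid : Setoid STerm := ⟨SEq, SEq.refl, SEq.symm, SEq.trans⟩

/-- The free algebra P on one generator x satisfying the laws Σ. -/
def FreeSig : Type := Quotient STerm.setoid

def FreeSig.mul : FreeSig → FreeSig → FreeSig :=
  Quotient.map₂ STerm.mul fun _ _ h _ _ h' => SEq.congrMul h h'

def FreeSig.comp : FreeSig → FreeSig → FreeSig :=
  Quotient.map₂ STerm.comp fun _ _ h _ _ h' => SEq.congrComp h h'

/-- a <_L b : b = a·c₀·...·c_{n-1} ∗ c_n with ∗ ∈ {·, ∘}, left association. -/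
def FreeSig.ltL (r s : FreeSig) : Prop :=
  ∃ (l : List FreeSig) (a : FreeSig),
    s = FreeSig.mul (List.foldl FreeSig.mul r l) a ∨
    s = FreeSig.comp (List.foldl FreeSig.mul r l) a

/-- a ≤_L b. -/
def FreeSig.leL (r s : FreeSig) : Prop := FreeSig.ltL r s ∨ r = s

/-- Composition powers p^m = p∘p∘...∘p (m times); value at 0 is a dummy. -/
def FreeSig.compPow (p : FreeSig) : ℕ → FreeSig
  | 0 => p
  | 1 => p
  | n + 2 => FreeSig.comp p (FreeSig.compPow p (n + 1))

/-- Dot powers p^(0) = p, p^(n+1) = p·p^(n). -/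
def FreeSig.dotPow (p : FreeSig) : ℕ → FreeSig
  | 0 => p
  | n + 1 => FreeSig.mul p (FreeSig.dotPow p n)


/-!
Left multiplication is strictly monotone for `<_L` (left self-distributivity pushes it through
the defining products), so `b <_L a·b`: otherwise the powers `a^(n)` would stay below `b`.
Hence, if `p·u ≤_L w`, the least `n` with `u <_L p^(n)` is smaller than the least `n` with
`w <_L p^(n)`, and no larger for the other elements of `F`. Summing these indices over `F` gives a
natural-number measure that strictly decreases from `w` to `u`, and an element of `S` of least
measure is the required `w`.
-/

section LinearOrder

variable {α : Type*} [LinearOrder α] {mul : α → α → α}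

/-- The properties of the left-divisibility order `<_L` on which the induction principle rests. -/
structure IsLeftDivisibilityOrder (mul : α → α → α) : Prop where
  lt_mul : ∀ a b, a < mul a b
  strictMono_mul_left : ∀ c, StrictMono (mul c)
  cofinal_iterate : ∀ p q, ∃ n, q < (mul p)^[n] p

noncomputable def powIndex (mul : α → α → α) (p w : α) : ℕ := sInf {n | w < (mul p)^[n] p}

theorem powIndex_le {p w : α} {n : ℕ} (hn : w < (mul p)^[n] p) : powIndex mul p w ≤ n :=
  Nat.sInf_le hn

namespace IsLeftDivisibilityOrder

theorem lt_mul_left (h : IsLeftDivisibilityOrder mul) (a b : α) : b < mul a b := by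
  rcases le_or_gt b a with hba | hab
  · exact hba.trans_lt (h.lt_mul a b)
  by_contra! hle
  have hpow : ∀ n, (mul a)^[n] a ≤ b := by
    intro n
    induction n with
    | zero => exact hab.le
    | succ n ih =>
      rw [Function.iterate_succ_apply']
      exact ((h.strictMono_mul_left a).monotone ih).trans hle
  obtain ⟨n, hn⟩ := h.cofinal_iterate a b
  exact (hpow n).not_gt hn

theorem lt_iterate_powIndex (h : IsLeftDivisibilityOrder mul) (p w : α) :
    w < (mul p)^[powIndex mul p w] p :=
  Nat.sInf_mem (h.cofinal_iterate p w)

theorem powIndex_mono (h : IsLeftDivisibilityOrder mul) (p : α) {u w : α} (huw : u ≤ w) :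
    powIndex mul p u ≤ powIndex mul p w :=
  powIndex_le (huw.trans_lt (h.lt_iterate_powIndex p w))

theorem powIndex_lt_of_mul_le (h : IsLeftDivisibilityOrder mul) {p u w : α} (hle : mul p u ≤ w) :
    powIndex mul p u < powIndex mul p w := by
  have hlt : mul p u < (mul p)^[powIndex mul p w] p := hle.trans_lt (h.lt_iterate_powIndex p w)
  rcases hN : powIndex mul p w with _ | m
  · rw [hN] at hlt
    exact absurd ((h.lt_mul p u).trans hlt) (lt_irrefl p)
  · rw [hN, Function.iterate_succ_apply'] at hlt
    exact Nat.lt_succ_of_le (powIndex_le ((h.strictMono_mul_left p).lt_iff_lt.1 hlt))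

theorem sum_powIndex_lt_of_mul_le (h : IsLeftDivisibilityOrder mul) {F : Finset α} {p u w : α}
    (hp : p ∈ F) (hle : mul p u ≤ w) :
    ∑ q ∈ F, powIndex mul q u < ∑ q ∈ F, powIndex mul q w := by
  have huw : u ≤ w := ((h.lt_mul_left p u).trans_le hle).le
  exact Finset.sum_lt_sum (fun q _ => h.powIndex_mono q huw)
    ⟨p, hp, h.powIndex_lt_of_mul_le hle⟩

theorem wellFounded_exists_mul_le (h : IsLeftDivisibilityOrder mul) (F : Finset α) :
    WellFounded fun u w => ∃ p ∈ F, mul p u ≤ w :=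
  Subrelation.wf (fun ⟨_, hp, hle⟩ => h.sum_powIndex_lt_of_mul_le hp hle)
    (InvImage.wf (fun w => ∑ q ∈ F, powIndex mul q w) wellFounded_lt)

theorem exists_mem_forall_not_mul_le (h : IsLeftDivisibilityOrder mul) (F : Finset α)
    {S : Set α} (hS : S.Nonempty) : ∃ w ∈ S, ∀ u ∈ S, ¬∃ p ∈ F, mul p u ≤ w :=
  (h.wellFounded_exists_mul_le F).has_min S hS

end IsLeftDivisibilityOrder

end LinearOrder

namespace FreeSig

theorem mul_mul (a b c : FreeSig) : mul a (mul b c) = mul (mul a b) (mul a c) := by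
  -- a·(b·c) = (a∘b)·c = ((a·b)∘a)·c = (a·b)·(a·c)
  refine Quotient.inductionOn₃ a b c fun a b c => Quotient.sound ?_
  exact ((SEq.mix a b c).symm.trans (SEq.congrMul (SEq.abs a b) (SEq.refl c))).trans
    (SEq.mix (STerm.mul a b) a c)

theorem mul_comp (a b c : FreeSig) : mul a (comp b c) = comp (mul a b) (mul a c) :=
  Quotient.inductionOn₃ a b c fun a b c => Quotient.sound (SEq.dist a b c)

theorem mul_foldl_mul (c : FreeSig) (l : List FreeSig) (a : FreeSig) :
    mul c (l.foldl mul a) = (l.map (mul c)).foldl mul (mul c a) := by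
  induction l generalizing a with
  | nil => rfl
  | cons d l ih => rw [List.foldl_cons, ih, mul_mul]; rfl

theorem ltL_mul (a b : FreeSig) : ltL a (mul a b) :=
  ⟨[], b, Or.inl rfl⟩

theorem ltL.mul_left (c : FreeSig) {a b : FreeSig} (h : ltL a b) : ltL (mul c a) (mul c b) := by
  obtain ⟨l, d, rfl | rfl⟩ := h
  · exact ⟨l.map (mul c), mul c d, Or.inl (by rw [mul_mul, mul_foldl_mul])⟩
  · exact ⟨l.map (mul c), mul c d, Or.inr (by rw [mul_comp, mul_foldl_mul])⟩

theorem dotPow_eq_iterate (p : FreeSig) (n : ℕ) : dotPow p n = (mul p)^[n] p := by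
  induction n with
  | zero => rfl
  | succ n ih => rw [Function.iterate_succ_apply', ← ih]; rfl

end FreeSig

theorem FreeSig.induction_principle_general
    (hirr : ∀ a : FreeSig, ¬ FreeSig.ltL a a)
    (htrans : ∀ a b c : FreeSig, FreeSig.ltL a b → FreeSig.ltL b c → FreeSig.ltL a c)
    (htri : ∀ a b : FreeSig, FreeSig.ltL a b ∨ a = b ∨ FreeSig.ltL b a)
    (hdom : ∀ p q : FreeSig, ∃ n : ℕ, FreeSig.ltL q (FreeSig.dotPow p n)) :
    ∀ (F S : Set FreeSig), F.Finite → S.Nonempty →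
      ∃ w ∈ S, ∀ u p : FreeSig, p ∈ F → FreeSig.leL (FreeSig.mul p u) w → u ∉ S := by
  classical
  intro F S hF hS
  have : IsStrictTotalOrder FreeSig FreeSig.ltL :=
    { irrefl := hirr, trans := htrans
      trichotomous := fun a b hab hba => ((htri a b).resolve_left hab).resolve_right hba }
  let := linearOrderOfSTO FreeSig.ltL
  have hL : IsLeftDivisibilityOrder FreeSig.mul :=
    { lt_mul := FreeSig.ltL_mul
      strictMono_mul_left := fun c _ _ => FreeSig.ltL.mul_left c
      cofinal_iterate := fun p q => by simp_rw [← FreeSig.dotPow_eq_iterate]; exact hdom p q }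
  obtain ⟨w, hwS, hmin⟩ := hL.exists_mem_forall_not_mul_le hF.toFinset hS
  exact ⟨w, hwS, fun u p hp hle hu => hmin u hu ⟨p, hF.mem_toFinset.2 hp, hle.symm⟩⟩

/-- The induction principle: if F ⊆ P is finite and S ⊆ P is nonempty then there is
w ∈ S such that for all u, if p·u ≤_L w for some p ∈ F, then u ∉ S.  (Assuming <_L
is an irreflexive linear order, p^m <_L p^(m) for m ≥ 1, and Theorem 1(iii): the
dot powers p^(n) eventually dominate any fixed element.) -/
theorem FreeSig.induction_principle
    (hirr : ∀ a : FreeSig, ¬ FreeSig.ltL a a)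
    (htrans : ∀ a b c : FreeSig, FreeSig.ltL a b → FreeSig.ltL b c → FreeSig.ltL a c)
    (htri : ∀ a b : FreeSig, FreeSig.ltL a b ∨ a = b ∨ FreeSig.ltL b a)
    (hpow : ∀ (p : FreeSig) (m : ℕ), 1 ≤ m →
      FreeSig.ltL (FreeSig.compPow p m) (FreeSig.dotPow p m))
    (hdom : ∀ p q : FreeSig, ∃ n : ℕ, FreeSig.ltL q (FreeSig.dotPow p n)) :
    ∀ (F S : Set FreeSig), F.Finite → S.Nonempty →
      ∃ w ∈ S, ∀ u p : FreeSig, p ∈ F → FreeSig.leL (FreeSig.mul p u) w → u ∉ S :=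
  FreeSig.induction_principle_general hirr htrans htri hdom
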